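/- Let p > 3 be a prime and let n ≥ 3, M be positive integers with A = 6M - n(n+1)(n+5) and R(n,M) the explicit degree-6 polynomial in M. If M³(n-1)²(n+4)⁴A⁷/(54·n⁴(n+1)²·R(n,M)) is a nonzero integer, then v_p(n+1) ≤ 2·v_p(M). -/
import Mathlib


theorem stmt (p : ℕ) (hp : p.Prime) (hp3 : 3 < p) (n M : ℤ) (hn : 3 ≤ n) (hM : 0 < M)
    (A : ℤ) (hA : A = 6*M - n*(n+1)*(n+5))
    (R : ℤ) (hR : R = 2^14*3^6*M^6 - 2^13*3^7*n*(n+1)*(n+3)*M^5 + 2^9*3^5*n^2*(n+1)*(n^4+93*n^3+629*n^2+1339*n+818)*M^4 - 2^7*3^4*n^3*(n+1)^2*(13*n^5+436*n^4+3688*n^3+12782*n^2+19163*n+9998)*M^3 + 2^2*3^3*n^4*(n+1)^3*(n+2)*(n+7)^2*(5*n^4+447*n^3+3303*n^2+7873*n+5652)*M^2 - 2^2*3^3*n^5*(n+1)^4*(n+2)^2*(n+5)^2*(n+7)^3*(3*n+5)*M + n^6*(n+1)^5*(n+2)^3*(n+5)^3*(n+7)^4)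
    (hint : ∃ k : ℤ, k ≠ 0 ∧
      ((M^3*(n-1)^2*(n+4)^4*A^7 : ℚ) / (54*n^4*(n+1)^2*R) = (k : ℚ))) :
    padicValInt p (n+1) ≤ 2 * padicValInt p M := by
  by_contra hcon
  push_neg at hcon
  haveI : Fact p.Prime := ⟨hp⟩
  have hq : Prime (p : ℤ) := Int.prime_iff_natAbs_prime.mpr (by simpa using hp)
  set q : ℤ := (p : ℤ) with hqdef
  set m := padicValInt p M with hm
  set a := padicValInt p (n+1) with ha
  have hM0 : M ≠ 0 := hM.ne'
  have hn10 : n + 1 ≠ 0 := by linarith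
  -- basic divisibilities
  have hdM : q ^ m ∣ M := (padicValInt_dvd_iff m M).mpr (Or.inr le_rfl)
  have hndM : ¬ q ^ (m+1) ∣ M := by
    rw [padicValInt_dvd_iff]
    push_neg
    exact ⟨hM0, by omega⟩
  have han : q ^ (2*m+1) ∣ n + 1 :=
    (padicValInt_dvd_iff (2*m+1) (n+1)).mpr (Or.inr (by omega))
  set d : ℤ := q ^ m with hddef
  have hdn1 : d ∣ n + 1 := dvd_trans (pow_dvd_pow q (by omega)) han
  have hd2n1 : d ^ 2 ∣ n + 1 := by
    have : q ^ (m*2) ∣ n + 1 := dvd_trans (pow_dvd_pow q (by omega)) han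
    rwa [pow_mul] at this
  have hpn1 : q ∣ n + 1 := dvd_trans (dvd_pow_self q (by omega : 2*m+1 ≠ 0)) han
  -- p does not divide small numbers
  have hqnat : ∀ c : ℕ, 0 < c → c < p → ¬ q ∣ (c : ℤ) := by
    intro c hc0 hcp h
    rw [hqdef] at h
    have : p ∣ c := by exact_mod_cast h
    have := Nat.le_of_dvd hc0 this
    omega
  have hq2 : ¬ q ∣ (2:ℤ) := by have := hqnat 2 (by norm_num) (by omega); exact_mod_cast this
  have hq3 : ¬ q ∣ (3:ℤ) := by have := hqnat 3 (by norm_num) (by omega); exact_mod_cast this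
  have hq6 : ¬ q ∣ (6:ℤ) := by
    intro h
    rw [hqdef] at h
    have h6 : p ∣ 6 := by exact_mod_cast h
    have hle := Nat.le_of_dvd (by norm_num) h6
    interval_cases p <;> revert hp h6 <;> decide
  have hqn1' : ¬ q ∣ (n-1) := by
    intro h
    apply hq2
    have h2 : (2:ℤ) = (n+1) - (n-1) := by ring
    rw [h2]; exact dvd_sub hpn1 h
  have hqn4 : ¬ q ∣ (n+4) := by
    intro h
    apply hq3
    have h3 : (3:ℤ) = (n+4) - (n+1) := by ring
    rw [h3]; exact dvd_sub h hpn1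
  -- valuation of A is exactly m
  have hdA : d ∣ A := by
    rw [hA]
    exact dvd_sub (Dvd.dvd.mul_left hdM 6) (dvd_trans hdn1 ⟨n*(n+5), by ring⟩)
  have hndA : ¬ q ^ (m+1) ∣ A := by
    intro h
    have h1 : q ^ (m+1) ∣ n*(n+1)*(n+5) := by
      have : q ^ (m+1) ∣ n + 1 := dvd_trans (pow_dvd_pow q (by omega)) han
      exact dvd_trans this ⟨n*(n+5), by ring⟩
    have h2 : q ^ (m+1) ∣ 6 * M := by
      have : 6*M = A + n*(n+1)*(n+5) := by rw [hA]; ring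
      rw [this]; exact dvd_add h h1
    exact hndM (hq.pow_dvd_of_dvd_mul_left (m+1) hq6 h2)
  -- extract exact powers
  obtain ⟨M', hM'⟩ := hdM
  have hM'nd : ¬ q ∣ M' := by
    intro h
    obtain ⟨c, hc⟩ := h
    exact hndM ⟨c, by rw [hM', hc, pow_succ]; ring⟩
  obtain ⟨A', hA'⟩ := hdA
  have hA'nd : ¬ q ∣ A' := by
    intro h
    obtain ⟨c, hc⟩ := h
    exact hndA ⟨c, by rw [hA', hc, pow_succ]; ring⟩
  -- get integer equation from the rational hypothesis
  obtain ⟨k, hk0, hkeq⟩ := hint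
  have hdenQ : (54*(n:ℚ)^4*((n:ℚ)+1)^2*(R:ℚ)) ≠ 0 := by
    intro h0
    rw [h0, div_zero] at hkeq
    exact hk0 (by exact_mod_cast hkeq.symm)
  rw [div_eq_iff hdenQ] at hkeq
  have hE : M^3*(n-1)^2*(n+4)^4*A^7 = k * (54*n^4*(n+1)^2*R) := by exact_mod_cast hkeq
  -- d^6 divides R
  have H1 : d^6 ∣ M^6 := pow_dvd_pow_of_dvd ⟨M', hM'⟩ 6
  have H2 : d^6 ∣ (n+1)*M^5 := by
    have := mul_dvd_mul hdn1 (pow_dvd_pow_of_dvd (⟨M', hM'⟩ : d ∣ M) 5)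
    calc d^6 = d * d^5 := by ring
      _ ∣ (n+1)*M^5 := this
  have H3 : d^6 ∣ (n+1)*M^4 := by
    have := mul_dvd_mul hd2n1 (pow_dvd_pow_of_dvd (⟨M', hM'⟩ : d ∣ M) 4)
    calc d^6 = d^2 * d^4 := by ring
      _ ∣ (n+1)*M^4 := this
  have H4 : d^6 ∣ (n+1)^2*M^3 := by
    have h1 : d^3 ∣ (n+1)^2 := dvd_trans ⟨d, by ring⟩ (pow_dvd_pow_of_dvd hd2n1 2)
    have := mul_dvd_mul h1 (pow_dvd_pow_of_dvd (⟨M', hM'⟩ : d ∣ M) 3)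
    calc d^6 = d^3 * d^3 := by ring
      _ ∣ (n+1)^2*M^3 := this
  have H5 : d^6 ∣ (n+1)^3 := by
    calc d^6 = (d^2)^3 := by ring
      _ ∣ (n+1)^3 := pow_dvd_pow_of_dvd hd2n1 3
  have H6 : d^6 ∣ (n+1)^4 := dvd_trans H5 ⟨n+1, by ring⟩
  have H7 : d^6 ∣ (n+1)^5 := dvd_trans H5 ⟨(n+1)^2, by ring⟩
  have hR6 : d^6 ∣ R := by
    rw [hR]
    refine dvd_add (dvd_sub (dvd_add (dvd_sub (dvd_add (dvd_sub ?_ ?_) ?_) ?_) ?_) ?_) ?_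
    · exact dvd_trans H1 ⟨2^14*3^6, by ring⟩
    · exact dvd_trans H2 ⟨2^13*3^7*n*(n+3), by ring⟩
    · exact dvd_trans H3 ⟨2^9*3^5*n^2*(n^4+93*n^3+629*n^2+1339*n+818), by ring⟩
    · exact dvd_trans H4 ⟨2^7*3^4*n^3*(13*n^5+436*n^4+3688*n^3+12782*n^2+19163*n+9998), by ring⟩
    · exact dvd_trans H5 ⟨2^2*3^3*n^4*(n+2)*(n+7)^2*(5*n^4+447*n^3+3303*n^2+7873*n+5652)*M^2, by ring⟩
    · exact dvd_trans H6 ⟨2^2*3^3*n^5*(n+2)^2*(n+5)^2*(n+7)^3*(3*n+5)*M, by ring⟩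
    · exact dvd_trans H7 ⟨n^6*(n+2)^3*(n+5)^3*(n+7)^4, by ring⟩
  -- d^10 * q^2 divides the RHS
  have hden : d^10 * q^2 ∣ k * (54*n^4*(n+1)^2*R) := by
    apply Dvd.dvd.mul_left
    have e2 : (d^2*q)^2 ∣ (n+1)^2 := by
      apply pow_dvd_pow_of_dvd
      have heq : q^(2*m+1) = d^2*q := by
        rw [show 2*m+1 = m*2+1 by omega, hddef, ← pow_mul, ← pow_succ]
      rw [← heq]; exact han
    calc d^10*q^2 = (d^2*q)^2 * d^6 := by ring
      _ ∣ (n+1)^2 * R := mul_dvd_mul e2 hR6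
      _ ∣ 54*n^4*(n+1)^2*R := ⟨54*n^4, by ring⟩
  -- rewrite numerator
  have hnum : M^3*(n-1)^2*(n+4)^4*A^7 = d^10 * (M'^3*(n-1)^2*(n+4)^4*A'^7) := by
    rw [hM', hA']; ring
  rw [← hE, hnum] at hden
  have hq0 : q ≠ 0 := by rw [hqdef]; exact_mod_cast hp.pos.ne'
  have hq2U : q^2 ∣ M'^3*(n-1)^2*(n+4)^4*A'^7 :=
    (mul_dvd_mul_iff_left (pow_ne_zero 10 (pow_ne_zero m hq0 : d ≠ 0))).mp hden
  have hqU : q ∣ M'^3*(n-1)^2*(n+4)^4*A'^7 :=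
    dvd_trans (dvd_pow_self q two_ne_zero) hq2U
  rcases hq.dvd_mul.mp hqU with h123 | h4
  · rcases hq.dvd_mul.mp h123 with h12 | h3
    · rcases hq.dvd_mul.mp h12 with h1 | h2
      · exact hM'nd (hq.dvd_of_dvd_pow h1)
      · exact hqn1' (hq.dvd_of_dvd_pow h2)
    · exact hqn4 (hq.dvd_of_dvd_pow h3)
  · exact hA'nd (hq.dvd_of_dvd_pow h4)
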